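/- arXiv:1110.2351 — 4 statements merged into one kernel-verified Lean document; each statement's English description precedes it below -/
import Mathlib

section
/- For every positive integer n there exists a constant φ(n) such that every finite subgroup G of GL(n, ℂ) contains an abelian normal subgroup H whose index [G : H] is at most φ(n) (Jordan's finiteness theorem for finite linear groups). -/
open Matrix
open scoped ComplexOrder

/-- Key commutation lemma: in a finite multiplicatively closed set of norm-preserving
elements of a normed `ℂ`-algebra, two elements close to `1` commute. -/
theorem jordan_aux_comm {E : Type*} [NormedRing E] [NormedAlgebra ℂ E]
    (U : Set E) (hU : U.Finite)
    (hmul : ∀ x ∈ U, ∀ y ∈ U, x * y ∈ U)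
    (hinv : ∀ x ∈ U, ∃ y ∈ U, x * y = 1 ∧ y * x = 1)
    (hleft : ∀ x ∈ U, ∀ z : E, ‖x * z‖ = ‖z‖)
    (hright : ∀ x ∈ U, ∀ z : E, ‖z * x‖ = ‖z‖)
    (hbig : ∀ x ∈ U, ‖x - 1‖ ≤ 2)
    {a b : E} (haU : a ∈ U) (hbU : b ∈ U)
    (ha : ‖a - 1‖ < 1/4) (hb : ‖b - 1‖ < 1/4) : a * b = b * a := by
  classical
  by_contra hab
  -- commutator estimate
  have hest : ∀ x y : E, ‖x * y - y * x‖ ≤ 2 * ‖x - 1‖ * ‖y - 1‖ := by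
    intro x y
    have hid : x * y - y * x = (x - 1) * (y - 1) - (y - 1) * (x - 1) := by noncomm_ring
    rw [hid]
    calc ‖(x - 1) * (y - 1) - (y - 1) * (x - 1)‖
        ≤ ‖(x - 1) * (y - 1)‖ + ‖(y - 1) * (x - 1)‖ := norm_sub_le _ _
      _ ≤ ‖x - 1‖ * ‖y - 1‖ + ‖y - 1‖ * ‖x - 1‖ :=
          add_le_add (norm_mul_le _ _) (norm_mul_le _ _)
      _ = 2 * ‖x - 1‖ * ‖y - 1‖ := by ring
  -- minimal non-commuting element
  set S : Finset E := hU.toFinset.filter (fun x => a * x ≠ x * a) with hS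
  have hbS : b ∈ S := by
    simp only [hS, Finset.mem_filter, Set.Finite.mem_toFinset]
    exact ⟨hbU, hab⟩
  obtain ⟨c₀, hc₀S, hmin⟩ := S.exists_min_image (fun x => ‖x - 1‖) ⟨b, hbS⟩
  simp only [hS, Finset.mem_filter, Set.Finite.mem_toFinset] at hc₀S
  obtain ⟨hc₀U, hc₀a⟩ := hc₀S
  have hc₀small : ‖c₀ - 1‖ < 1/4 := lt_of_le_of_lt (hmin b hbS) hb
  have hc₀pos : 0 < ‖c₀ - 1‖ := by
    rw [norm_pos_iff, sub_ne_zero]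
    rintro rfl
    exact hc₀a (by rw [one_mul, mul_one])
  obtain ⟨a', ha'U, haa', ha'a⟩ := hinv a haU
  obtain ⟨c₀', hc₀'U, hcc', hc'c⟩ := hinv c₀ hc₀U
  have h1U : (1 : E) ∈ U := haa' ▸ hmul a haU a' ha'U
  have hpowU : ∀ x ∈ U, ∀ k : ℕ, x ^ k ∈ U := by
    intro x hx k
    induction k with
    | zero => simpa using h1U
    | succ k ih => rw [pow_succ]; exact hmul _ ih _ hx
  have hCaa' : Commute a a' := by unfold Commute SemiconjBy; rw [haa', ha'a]
  have hak : ∀ k : ℕ, a ^ k * a' ^ k = 1 := by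
    intro k
    rw [← hCaa'.mul_pow, haa', one_pow]
  -- the commutator c
  set c : E := a * c₀ * a' * c₀' with hc
  have hcU : c ∈ U := hmul _ (hmul _ (hmul a haU c₀ hc₀U) a' ha'U) c₀' hc₀'U
  have hkey : ∀ k : ℕ, (a ^ k * c₀ * a' ^ k * c₀') - 1
      = (a ^ k * c₀ - c₀ * a ^ k) * (a' ^ k * c₀') := by
    intro k
    have : (a ^ k * c₀ - c₀ * a ^ k) * (a' ^ k * c₀')
        = a ^ k * c₀ * a' ^ k * c₀' - c₀ * (a ^ k * a' ^ k) * c₀' := by noncomm_ring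
    rw [this, hak k, mul_one, hcc']
  have hnorm_k : ∀ k : ℕ, ‖(a ^ k * c₀ * a' ^ k * c₀') - 1‖ ≤ 4 * ‖c₀ - 1‖ := by
    intro k
    rw [hkey k]
    have h1 : ‖(a ^ k * c₀ - c₀ * a ^ k) * (a' ^ k * c₀')‖ = ‖a ^ k * c₀ - c₀ * a ^ k‖ :=
      hright _ (hmul _ (hpowU a' ha'U k) _ hc₀'U) _
    rw [h1]
    calc ‖a ^ k * c₀ - c₀ * a ^ k‖ ≤ 2 * ‖a ^ k - 1‖ * ‖c₀ - 1‖ := hest _ _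
      _ ≤ 2 * 2 * ‖c₀ - 1‖ := by
          have := hbig _ (hpowU a haU k)
          nlinarith [norm_nonneg (c₀ - 1)]
      _ = 4 * ‖c₀ - 1‖ := by ring
  -- c is small
  have hc1 : ‖c - 1‖ ≤ 2 * ‖a - 1‖ * ‖c₀ - 1‖ := by
    have h1 : ‖c - 1‖ = ‖a * c₀ - c₀ * a‖ := by
      have hk := hkey 1
      simp only [pow_one] at hk
      rw [hc, hk]
      exact hright _ (hmul _ ha'U _ hc₀'U) _
    rw [h1]; exact hest a c₀
  have hcsmall : ‖c - 1‖ < ‖c₀ - 1‖ := by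
    calc ‖c - 1‖ ≤ 2 * ‖a - 1‖ * ‖c₀ - 1‖ := hc1
      _ < ‖c₀ - 1‖ := by nlinarith [norm_nonneg (a - 1)]
  -- c commutes with a
  have hac : a * c = c * a := by
    by_contra hX
    have hcS : c ∈ S := by
      simp only [hS, Finset.mem_filter, Set.Finite.mem_toFinset]
      exact ⟨hcU, hX⟩
    exact absurd (hmin c hcS) (not_le.mpr hcsmall)
  have hCac : Commute a c := hac
  -- c ≠ 1
  have hcne : c ≠ 1 := by
    intro hX
    apply hc₀a
    have h2 : c * c₀ = c₀ := by rw [hX, one_mul]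
    rw [hc, mul_assoc _ c₀' c₀, hc'c, mul_one] at h2
    have h3 : a * c₀ * a' * a = c₀ * a := by rw [h2]
    rw [mul_assoc _ a' a, ha'a, mul_one] at h3
    exact h3
  have hcpos : 0 < ‖c - 1‖ := by rw [norm_pos_iff, sub_ne_zero]; exact hcne
  -- powers of c
  have hck : ∀ k : ℕ, c ^ k = a ^ k * c₀ * a' ^ k * c₀' := by
    intro k
    induction k with
    | zero =>
        simp only [pow_zero, one_mul, mul_one]
        exact hcc'.symm
    | succ k ih =>
        have h4 : a ^ k * c₀ * a' ^ k = c ^ k * c₀ := by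
          rw [ih, mul_assoc (a ^ k * c₀ * a' ^ k) c₀' c₀, hc'c, mul_one]
        calc c ^ (k+1) = c ^ k * c := pow_succ c k
          _ = c ^ k * (a * c₀ * a' * c₀') := by rw [← hc]
          _ = (c ^ k * a) * c₀ * a' * c₀' := by noncomm_ring
          _ = (a * c ^ k) * c₀ * a' * c₀' := by rw [(hCac.pow_right k).eq]
          _ = a * (a ^ k * c₀ * a' ^ k) * a' * c₀' := by rw [h4]; noncomm_ring
          _ = a ^ (k+1) * c₀ * a' ^ (k+1) * c₀' := by
              rw [pow_succ, pow_succ, ← ((Commute.refl a).pow_right k).eq]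
              noncomm_ring
  have hckn : ∀ k : ℕ, ‖c ^ k - 1‖ ≤ 4 * ‖c₀ - 1‖ := fun k => (hck k) ▸ hnorm_k k
  -- c has finite order
  obtain ⟨d, hdU, hcd, hdc⟩ := hinv c hcU
  have hCcd : Commute c d := by unfold Commute SemiconjBy; rw [hcd, hdc]
  obtain ⟨i, -, j, -, hij, hcij⟩ :=
    Set.infinite_univ.exists_ne_map_eq_of_mapsTo
      (f := fun k : ℕ => c ^ k) (fun k _ => hpowU c hcU k) hU
  wlog hlt : i < j generalizing i j
  · exact this j i hij.symm hcij.symm ((hij.lt_or_gt).resolve_left hlt)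
  set m : ℕ := j - i with hm
  have hm0 : 0 < m := Nat.sub_pos_of_lt hlt
  have hcm : c ^ m = 1 := by
    have h5 : d ^ i * c ^ i = 1 := by rw [← hCcd.symm.mul_pow, hdc, one_pow]
    have h6 : c ^ i * c ^ m = c ^ j := by rw [← pow_add, hm, Nat.add_sub_cancel' hlt.le]
    calc c ^ m = (d ^ i * c ^ i) * c ^ m := by rw [h5, one_mul]
      _ = d ^ i * c ^ j := by rw [mul_assoc, h6]
      _ = d ^ i * c ^ i := by rw [← hcij]
      _ = 1 := h5
  -- the averaging projection
  set s : E := (Finset.range m).sum (fun k => c ^ k) with hs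
  have hcs : c * s = s := by
    have h7 : c * s = (Finset.range m).sum (fun k => c ^ (k+1)) := by
      rw [hs, Finset.mul_sum]
      exact Finset.sum_congr rfl fun k _ => (pow_succ' c k).symm
    have h8 := Finset.sum_range_succ' (fun k => c ^ k) m
    have h9 := Finset.sum_range_succ (fun k => c ^ k) m
    rw [h8] at h9
    rw [h7, hs]
    have : (Finset.range m).sum (fun k => c ^ (k+1)) + c ^ 0
        = (Finset.range m).sum (fun k => c ^ k) + c ^ 0 := by
      rw [h9, pow_zero, hcm]
    exact add_right_cancel this
  set f : E := (m : ℂ)⁻¹ • s with hf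
  have hcf : c * f = f := by rw [hf, mul_smul_comm, hcs]
  have hfnorm : ‖1 - f‖ < 1 := by
    have h10 : (1 : E) - f = (m : ℂ)⁻¹ • (Finset.range m).sum (fun k => (1 : E) - c ^ k) := by
      rw [Finset.sum_sub_distrib, smul_sub, hf, hs]
      congr 1
      rw [Finset.sum_const, Finset.card_range, ← Nat.cast_smul_eq_nsmul ℂ, smul_smul,
        inv_mul_cancel₀ (by exact_mod_cast hm0.ne' : (m : ℂ) ≠ 0), one_smul]
    rw [h10, norm_smul]
    have h11 : ‖(Finset.range m).sum (fun k => (1 : E) - c ^ k)‖ < m := by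
      calc ‖(Finset.range m).sum (fun k => (1 : E) - c ^ k)‖
          ≤ (Finset.range m).sum (fun k => ‖(1 : E) - c ^ k‖) := norm_sum_le _ _
        _ < (Finset.range m).sum (fun _ => (1 : ℝ)) := by
            apply Finset.sum_lt_sum_of_nonempty (Finset.nonempty_range_iff.mpr hm0.ne')
            intro k _
            rw [norm_sub_rev]
            calc ‖c ^ k - 1‖ ≤ 4 * ‖c₀ - 1‖ := hckn k
              _ < 1 := by linarith
        _ = m := by rw [Finset.sum_const, Finset.card_range, nsmul_eq_mul, mul_one]
    have hminv : ‖((m : ℂ)⁻¹ : ℂ)‖ = (m : ℝ)⁻¹ := by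
      rw [norm_inv, Complex.norm_natCast]
    rw [hminv]
    have hmpos : (0:ℝ) < (m:ℝ) := by exact_mod_cast hm0
    calc (m : ℝ)⁻¹ * ‖(Finset.range m).sum (fun k => (1 : E) - c ^ k)‖
        < (m : ℝ)⁻¹ * m := by
          apply mul_lt_mul_of_pos_left h11 (by positivity)
      _ = 1 := inv_mul_cancel₀ hmpos.ne'
  -- the contradiction
  have hfinal : c - 1 = (c - 1) * (1 - f) := by
    have : (c - 1) * (1 - f) = (c - 1) - (c * f - f) := by noncomm_ring
    rw [this, hcf, sub_self, sub_zero]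
  have h12 := norm_mul_le (c-1) (1-f)
  rw [← hfinal] at h12
  nlinarith

/-- Packing bound: there is a uniform bound on the size of `1/4`-separated sets in
the unit ball of a proper normed space. -/
theorem jordan_aux_packing (E : Type*) [NormedAddCommGroup E] [ProperSpace E] :
    ∃ N : ℕ, ∀ s : Finset E, (∀ x ∈ s, ‖x‖ ≤ 1) →
      (∀ x ∈ s, ∀ y ∈ s, x ≠ y → (1/4:ℝ) ≤ ‖x - y‖) → s.card ≤ N := by
  classical
  obtain ⟨t, -, htf, hcov⟩ :=
    (isCompact_closedBall (0:E) 1).finite_cover_balls (e := 1/8) (by norm_num)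
  refine ⟨htf.toFinset.card, ?_⟩
  intro s hs hsep
  have hxball : ∀ x ∈ s, ∃ y ∈ htf.toFinset, x ∈ Metric.ball y (1/8) := by
    intro x hx
    have : x ∈ Metric.closedBall (0:E) 1 := by
      rw [Metric.mem_closedBall, dist_zero_right]; exact hs x hx
    have := hcov this
    rw [Set.mem_iUnion₂] at this
    obtain ⟨y, hyt, hy⟩ := this
    exact ⟨y, htf.mem_toFinset.mpr hyt, hy⟩
  set F : E → E := fun x =>
    if h : ∃ y ∈ htf.toFinset, x ∈ Metric.ball y (1/8) then h.choose else 0 with hF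
  apply Finset.card_le_card_of_injOn F
  · intro x hx
    have h := hxball x hx
    simp only [hF, dif_pos h]
    exact h.choose_spec.1
  · intro x hx x' hx' hFeq
    by_contra hne
    have h := hxball x hx
    have h' := hxball x' hx'
    have hx1 : x ∈ Metric.ball (F x) (1/8) := by
      simp only [hF, dif_pos h]; exact h.choose_spec.2
    have hx2 : x' ∈ Metric.ball (F x') (1/8) := by
      simp only [hF, dif_pos h']; exact h'.choose_spec.2
    rw [← hFeq] at hx2
    have hd : dist x x' < 1/4 := by
      have := dist_triangle x (F x) x'
      rw [Metric.mem_ball] at hx1 hx2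
      rw [dist_comm (F x) x'] at this
      linarith
    rw [dist_eq_norm] at hd
    exact absurd (hsep x hx x' hx' hne) (not_le.mpr hd)

open scoped Matrix.Norms.L2Operator in
/-- **Jordan's finiteness theorem for finite linear groups.** For every positive integer `n`
there is a constant `φ n` such that every finite subgroup `G` of `GL(n, ℂ)` contains an
abelian normal subgroup `H` of index at most `φ n`. -/
theorem jordan_finite_linear_groups (n : ℕ) (hn : 0 < n) :
    ∃ φ : ℕ, ∀ G : Subgroup (Matrix.GeneralLinearGroup (Fin n) ℂ), Finite G →
      ∃ H : Subgroup G, H.Normal ∧ (∀ a b : H, a * b = b * a) ∧ H.index ≤ φ := by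
  classical
  haveI : Nonempty (Fin n) := ⟨⟨0, hn⟩⟩
  haveI : ProperSpace (Matrix (Fin n) (Fin n) ℂ) := FiniteDimensional.proper ℂ _
  obtain ⟨N, hN⟩ := jordan_aux_packing (Matrix (Fin n) (Fin n) ℂ)
  refine ⟨N, ?_⟩
  intro G hG
  haveI := Fintype.ofFinite G
  set mat : G → Matrix (Fin n) (Fin n) ℂ :=
    fun g => ((g : Matrix.GeneralLinearGroup (Fin n) ℂ) : Matrix (Fin n) (Fin n) ℂ) with hmat
  have hmat_mul : ∀ g h : G, mat (g * h) = mat g * mat h := fun g h => rfl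
  have hmat_one : mat 1 = 1 := rfl
  have hmat_inv : ∀ g : G, mat g * mat g⁻¹ = 1 := by
    intro g
    rw [← hmat_mul, mul_inv_cancel, hmat_one]
  have hmat_inj : Function.Injective mat := by
    intro g h e
    exact Subtype.ext (Units.ext e)
  -- the averaged positive definite matrix
  set P : Matrix (Fin n) (Fin n) ℂ := ∑ g : G, (mat g)ᴴ * (mat g) with hPdef
  have hsumPSD : ∀ s : Finset G, Matrix.PosSemidef (∑ g ∈ s, (mat g)ᴴ * (mat g)) := by
    intro s
    exact Finset.sum_induction (fun g => (mat g)ᴴ * (mat g)) Matrix.PosSemidef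
      (fun A B hA hB => hA.add hB) Matrix.PosSemidef.zero
      (fun g _ => Matrix.posSemidef_conjTranspose_mul_self (mat g))
  have hP : P.PosDef := by
    have h1 : P = (mat 1)ᴴ * (mat 1) + ∑ g ∈ Finset.univ.erase 1, (mat g)ᴴ * (mat g) :=
      (Finset.add_sum_erase _ _ (Finset.mem_univ 1)).symm
    rw [h1, hmat_one, Matrix.conjTranspose_one, one_mul]
    exact (Matrix.PosDef.one).add_posSemidef (hsumPSD _)
  have hPconj : ∀ g : G, (mat g)ᴴ * P * (mat g) = P := by
    intro g
    have h1 : (mat g)ᴴ * P * (mat g) = ∑ h : G, (mat (h * g))ᴴ * (mat (h * g)) := by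
      rw [hPdef, Finset.mul_sum, Finset.sum_mul]
      refine Finset.sum_congr rfl fun h _ => ?_
      rw [hmat_mul, Matrix.conjTranspose_mul]
      noncomm_ring
    rw [h1, hPdef]
    exact Fintype.sum_bijective _ (Equiv.mulRight g).bijective _ _ (fun h => rfl)
  -- square root of P
  obtain ⟨T, hTherm, hTT⟩ : ∃ T : Matrix (Fin n) (Fin n) ℂ, Tᴴ = T ∧ T * T = P := by
    open scoped MatrixOrder in
    obtain ⟨X, hX, -, hXX⟩ := CFC.exists_sqrt_of_isSelfAdjoint_of_quasispectrumRestricts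
      hP.posSemidef.isHermitian (QuasispectrumRestricts.nnreal_of_nonneg hP.posSemidef.nonneg)
    exact ⟨X, hX, hXX⟩
  have hTdet : IsUnit T.det := by
    have h1 : IsUnit P.det := hP.isUnit.map (Matrix.detMonoidHom)
    rw [← hTT, Matrix.det_mul] at h1
    exact (IsUnit.mul_iff.mp h1).1
  have hTi : T * T⁻¹ = 1 := Matrix.mul_nonsing_inv T hTdet
  have hiT : T⁻¹ * T = 1 := Matrix.nonsing_inv_mul T hTdet
  have hTiherm : (T⁻¹)ᴴ = T⁻¹ := by
    rw [Matrix.conjTranspose_nonsing_inv, hTherm]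
  -- the unitarized representation
  set ρ : G → Matrix (Fin n) (Fin n) ℂ := fun g => T * mat g * T⁻¹ with hρdef
  have hρ_mul : ∀ g h : G, ρ (g * h) = ρ g * ρ h := by
    intro g h
    simp only [hρdef, hmat_mul]
    calc T * (mat g * mat h) * T⁻¹ = T * mat g * (T⁻¹ * T) * mat h * T⁻¹ := by
          rw [hiT]; noncomm_ring
      _ = T * mat g * T⁻¹ * (T * mat h * T⁻¹) := by noncomm_ring
  have hρ_one : ρ 1 = 1 := by
    simp only [hρdef, hmat_one, mul_one, hTi]
  have hρ_inv : ∀ g : G, ρ g * ρ g⁻¹ = 1 := by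
    intro g; rw [← hρ_mul, mul_inv_cancel, hρ_one]
  have hρ_inv' : ∀ g : G, ρ g⁻¹ * ρ g = 1 := by
    intro g; rw [← hρ_mul, inv_mul_cancel, hρ_one]
  have hρ_inj : Function.Injective ρ := by
    intro g h e
    apply hmat_inj
    simp only [hρdef] at e
    calc mat g = (T⁻¹ * T) * mat g * (T⁻¹ * T) := by rw [hiT]; noncomm_ring
      _ = T⁻¹ * (T * mat g * T⁻¹) * T := by noncomm_ring
      _ = T⁻¹ * (T * mat h * T⁻¹) * T := by rw [e]
      _ = (T⁻¹ * T) * mat h * (T⁻¹ * T) := by noncomm_ring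
      _ = mat h := by rw [hiT]; noncomm_ring
  have hρ_unitary : ∀ g : G, ρ g ∈ unitary (Matrix (Fin n) (Fin n) ℂ) := by
    intro g
    have hstar : star (ρ g) * ρ g = 1 := by
      rw [hρdef]
      simp only [Matrix.star_eq_conjTranspose, Matrix.conjTranspose_mul, hTiherm, hTherm]
      calc T⁻¹ * ((mat g)ᴴ * T) * (T * mat g * T⁻¹)
          = T⁻¹ * ((mat g)ᴴ * (T * T) * mat g) * T⁻¹ := by noncomm_ring
        _ = T⁻¹ * P * T⁻¹ := by rw [hTT, hPconj g]
        _ = 1 := by rw [← hTT, ← mul_assoc, hiT, one_mul, hTi]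
    exact Unitary.mem_iff.mpr ⟨hstar, mul_eq_one_comm.mp hstar⟩
  -- Lemma A hypotheses for the range of ρ
  haveI : Nontrivial (Matrix (Fin n) (Fin n) ℂ) := inferInstance
  set U : Set (Matrix (Fin n) (Fin n) ℂ) := Set.range ρ with hUdef
  have hUfin : U.Finite := Set.finite_range ρ
  have hUmul : ∀ x ∈ U, ∀ y ∈ U, x * y ∈ U := by
    rintro x ⟨g, rfl⟩ y ⟨h, rfl⟩
    exact ⟨g * h, hρ_mul g h⟩
  have hUinv : ∀ x ∈ U, ∃ y ∈ U, x * y = 1 ∧ y * x = 1 := by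
    rintro x ⟨g, rfl⟩
    exact ⟨ρ g⁻¹, ⟨g⁻¹, rfl⟩, hρ_inv g, hρ_inv' g⟩
  have hUleft : ∀ x ∈ U, ∀ z : Matrix (Fin n) (Fin n) ℂ, ‖x * z‖ = ‖z‖ := by
    rintro x ⟨g, rfl⟩ z
    exact CStarRing.norm_mem_unitary_mul z (hρ_unitary g)
  have hUright : ∀ x ∈ U, ∀ z : Matrix (Fin n) (Fin n) ℂ, ‖z * x‖ = ‖z‖ := by
    rintro x ⟨g, rfl⟩ z
    exact CStarRing.norm_mul_mem_unitary z (hρ_unitary g)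
  have hUnorm : ∀ x ∈ U, ‖x‖ = 1 := by
    rintro x ⟨g, rfl⟩
    exact CStarRing.norm_of_mem_unitary (hρ_unitary g)
  have hUbig : ∀ x ∈ U, ‖x - 1‖ ≤ 2 := by
    intro x hx
    calc ‖x - 1‖ ≤ ‖x‖ + ‖(1 : Matrix (Fin n) (Fin n) ℂ)‖ := norm_sub_le _ _
      _ = 2 := by rw [hUnorm x hx, norm_one]; norm_num
  -- commutation of small elements
  have hScomm : ∀ g g' : G, ‖ρ g - 1‖ < 1/4 → ‖ρ g' - 1‖ < 1/4 → g * g' = g' * g := by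
    intro g g' h1 h2
    apply hρ_inj
    rw [hρ_mul, hρ_mul]
    exact jordan_aux_comm U hUfin hUmul hUinv hUleft hUright hUbig
      ⟨g, rfl⟩ ⟨g', rfl⟩ h1 h2
  -- the subgroup
  set S : Set G := {g : G | ‖ρ g - 1‖ < 1/4} with hSdef
  refine ⟨Subgroup.closure S, ?_, ?_, ?_⟩
  · -- normality
    have hconjS : ∀ h : G, ∀ g ∈ S, h * g * h⁻¹ ∈ S := by
      intro h g hg
      have he : ρ (h * g * h⁻¹) - 1 = ρ h * (ρ g - 1) * ρ h⁻¹ := by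
        rw [hρ_mul, hρ_mul, mul_sub, sub_mul, mul_one, hρ_inv h]
      have : ‖ρ (h * g * h⁻¹) - 1‖ = ‖ρ g - 1‖ := by
        rw [he, hUright _ ⟨h⁻¹, rfl⟩, hUleft _ ⟨h, rfl⟩]
      simpa [hSdef, this] using hg
    constructor
    intro x hx h
    have himg : (fun g => h * g * h⁻¹) '' S = S := by
      apply Set.Subset.antisymm
      · rintro _ ⟨g, hg, rfl⟩
        exact hconjS h g hg
      · intro g hg
        exact ⟨h⁻¹ * g * h, by simpa [mul_assoc] using hconjS h⁻¹ g hg, by group⟩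
    have hmap : (Subgroup.closure S).map (MulAut.conj h).toMonoidHom
        = Subgroup.closure S := by
      rw [MonoidHom.map_closure]
      have himg2 : ⇑(MulAut.conj h).toMonoidHom '' S = S := by
        have he : ⇑(MulAut.conj h).toMonoidHom = fun g : G => h * g * h⁻¹ := by
          funext g
          simp [MulAut.conj_apply]
        rw [he]
        exact himg
      rw [himg2]
    rw [← hmap]
    exact ⟨x, hx, rfl⟩
  · -- commutativity
    have h1 : Subgroup.closure S ≤ Subgroup.centralizer S := by
      rw [Subgroup.closure_le]
      intro s hs
      rw [SetLike.mem_coe, Subgroup.mem_centralizer_iff]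
      intro m hm
      exact hScomm m s hm hs
    have h2 : Subgroup.closure S ≤ Subgroup.centralizer (Subgroup.closure S : Set G) := by
      rw [Subgroup.closure_le]
      intro s hs
      rw [SetLike.mem_coe, Subgroup.mem_centralizer_iff]
      intro m hm
      exact (Subgroup.mem_centralizer_iff.mp (h1 hm) s hs).symm
    intro a b
    have := Subgroup.mem_centralizer_iff.mp (h2 a.2) b b.2
    exact Subtype.ext this.symm
  · -- index bound
    haveI : Fintype (G ⧸ Subgroup.closure S) := Fintype.ofFinite _
    set q : G ⧸ Subgroup.closure S → Matrix (Fin n) (Fin n) ℂ :=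
      fun x => ρ x.out with hqdef
    have hsep : ∀ x y : G ⧸ Subgroup.closure S, x ≠ y → (1/4 : ℝ) ≤ ‖q x - q y‖ := by
      intro x y hxy
      have hmem : ¬ (x.out⁻¹ * y.out ∈ Subgroup.closure S) := by
        intro hmem
        apply hxy
        rw [← QuotientGroup.out_eq' x, ← QuotientGroup.out_eq' y]
        exact QuotientGroup.eq.mpr hmem
      have hnotS : x.out⁻¹ * y.out ∉ S := fun h => hmem (Subgroup.subset_closure h)
      have hge : (1/4 : ℝ) ≤ ‖ρ (x.out⁻¹ * y.out) - 1‖ := le_of_not_gt hnotS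
      have he : ρ x.out * (ρ (x.out⁻¹ * y.out) - 1) = q y - q x := by
        rw [mul_sub, ← hρ_mul, mul_one]
        congr 2
        group
      have heq : ‖ρ (x.out⁻¹ * y.out) - 1‖ = ‖q y - q x‖ := by
        rw [← he, hUleft _ ⟨x.out, rfl⟩]
      rw [norm_sub_rev]
      linarith [heq.le, heq.ge]
    have hqinj : Function.Injective q := by
      intro x y hxy
      by_contra hne
      have := hsep x y hne
      rw [hxy, sub_self, norm_zero] at this
      linarith
    set sF : Finset (Matrix (Fin n) (Fin n) ℂ) := Finset.univ.image q with hsdef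
    have hcard : (Subgroup.closure S).index = sF.card := by
      rw [Subgroup.index, Nat.card_eq_fintype_card, hsdef,
        Finset.card_image_of_injective _ hqinj, Finset.card_univ]
    rw [hcard]
    apply hN
    · intro x hx
      rw [hsdef, Finset.mem_image] at hx
      obtain ⟨u, -, rfl⟩ := hx
      exact le_of_eq (hUnorm _ ⟨u.out, rfl⟩)
    · intro x hx y hy hne
      rw [hsdef, Finset.mem_image] at hx hy
      obtain ⟨u, -, rfl⟩ := hx
      obtain ⟨v, -, rfl⟩ := hy
      exact hsep u v (fun h => hne (by rw [h]))
end

section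
/- Two n×n matrices A and B over a field K are similar over K if and only if their characteristic matrices X·I − A and X·I − B are equivalent over the polynomial ring K[X], that is, if and only if there exist matrices P and Q with entries in K[X], invertible over K[X], such that P·(X·I − A)·Q = X·I − B (the Jordan–Weierstrass similarity criterion via elementary divisors). -/
set_option maxHeartbeats 1000000

open Polynomial in
/-- If `p * (X - C A) = (X - C B) * u` in `S[X]` (noncommutative `S`), then the remainder
of `p` under left division by `X - C B` is a constant `P₀` intertwining `A` and `B`. -/
lemma aux_remainder_intertwines {S : Type*} [Ring S] [Nontrivial S] (A B : S) (p u : S[X])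
    (h : p * (X - C A) = (X - C B) * u) :
    (p %ₘ (X - C B)) = C ((p %ₘ (X - C B)).coeff 0) ∧
      (p %ₘ (X - C B)).coeff 0 * A = B * (p %ₘ (X - C B)).coeff 0 := by
  have hmB : (X - C B).Monic := monic_X_sub_C B
  have hdB : (X - C B).degree = 1 := degree_X_sub_C B
  have hdA : (X - C A).degree = 1 := degree_X_sub_C A
  set r := p %ₘ (X - C B) with hr
  have hrdeg : r.degree ≤ 0 := by
    rw [← Nat.WithBot.lt_one_iff_le_zero, ← hdB]
    exact degree_modByMonic_lt p hmB
  have hrC : r = C (r.coeff 0) := eq_C_of_degree_le_zero hrdeg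
  refine ⟨hrC, ?_⟩
  set t := u - (p /ₘ (X - C B)) * (X - C A) with ht
  have hreq : r = p - (X - C B) * (p /ₘ (X - C B)) :=
    eq_sub_of_add_eq (modByMonic_add_div p (X - C B))
  have hkey : C (r.coeff 0) * (X - C A) = (X - C B) * t := by
    rw [← hrC, hreq, ht, sub_mul p ((X - C B) * (p /ₘ (X - C B))) (X - C A), h,
      mul_sub (X - C B) u (p /ₘ (X - C B) * (X - C A)),
      mul_assoc (X - C B) (p /ₘ (X - C B)) (X - C A)]
  have hldeg : (C (r.coeff 0) * (X - C A)).degree ≤ 1 := by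
    refine (degree_mul_le _ _).trans ?_
    calc (C (r.coeff 0)).degree + (X - C A).degree ≤ 0 + 1 :=
          add_le_add degree_C_le (le_of_eq hdA)
      _ = 1 := by norm_num
  have htdeg : t.degree ≤ 0 := by
    rcases eq_or_ne t 0 with h0 | h0
    · simp [h0]
    · have hlc : (X - C B).leadingCoeff * t.leadingCoeff ≠ 0 := by
        rw [hmB.leadingCoeff, one_mul]
        exact leadingCoeff_ne_zero.2 h0
      have h2 : (1 : WithBot ℕ) + t.degree ≤ 1 := by
        have h2' : ((X - C B) * t).degree ≤ 1 := hkey ▸ hldeg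
        rwa [degree_mul' hlc, hdB] at h2'
      rw [degree_eq_natDegree h0] at h2 ⊢
      have h3 : (1 + t.natDegree : ℕ) ≤ 1 := by exact_mod_cast h2
      have : t.natDegree = 0 := by omega
      rw [this]; exact le_rfl
  have htC : t = C (t.coeff 0) := eq_C_of_degree_le_zero htdeg
  rw [htC] at hkey
  have e1 := Polynomial.ext_iff.mp hkey 1
  have e0 := Polynomial.ext_iff.mp hkey 0
  rw [mul_sub, sub_mul, ← C_mul, ← C_mul, X_mul_C] at e1 e0
  simp only [coeff_sub, coeff_C_mul, coeff_mul_C, coeff_X_one, coeff_X_zero, coeff_C,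
    mul_one, mul_zero, zero_mul, one_mul] at e1 e0
  norm_num at e1 e0
  rw [e1] at e0 ⊢
  exact e0

/-- **The Jordan–Weierstrass similarity criterion.** Two `n × n` matrices `A` and `B` over
a field `K` are similar over `K` if and only if their characteristic matrices `X·I − A`
and `X·I − B` are equivalent over the polynomial ring `K[X]`, i.e. there are matrices `P`
and `Q` over `K[X]`, invertible over `K[X]`, with `P·(X·I − A)·Q = X·I − B`. -/
theorem similar_iff_charmatrix_equivalent {K : Type*} [Field K] {n : ℕ}
    (A B : Matrix (Fin n) (Fin n) K) :
    (∃ P : Matrix (Fin n) (Fin n) K, IsUnit P ∧ P⁻¹ * A * P = B) ↔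
    (∃ P Q : Matrix (Fin n) (Fin n) (Polynomial K), IsUnit P ∧ IsUnit Q ∧
      P * Matrix.charmatrix A * Q = Matrix.charmatrix B) := by
  constructor
  · rintro ⟨P, hP, hPAB⟩
    have hdet : IsUnit P.det := (Matrix.isUnit_iff_isUnit_det P).mp hP
    refine ⟨(Polynomial.C (R := K)).mapMatrix P⁻¹, (Polynomial.C (R := K)).mapMatrix P,
      (Matrix.isUnit_nonsing_inv_iff.mpr hP).map _, hP.map _, ?_⟩
    have hscalar : ∀ M : Matrix (Fin n) (Fin n) (Polynomial K),
        M * Matrix.scalar (Fin n) (Polynomial.X (R := K)) =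
          Matrix.scalar (Fin n) Polynomial.X * M := fun M =>
      ((Matrix.scalar_commute Polynomial.X (fun r => Commute.all _ r) M).symm).eq
    rw [Matrix.charmatrix, Matrix.charmatrix, mul_sub, sub_mul, ← map_mul, ← map_mul,
      hPAB, mul_assoc, ← hscalar, ← mul_assoc, ← map_mul, Matrix.nonsing_inv_mul P hdet,
      map_one, one_mul]
  · rintro ⟨P, Q, hP, hQ, h⟩
    rcases Nat.eq_zero_or_pos n with hn | hn
    · subst hn
      exact ⟨1, isUnit_one, Subsingleton.elim _ _⟩
    haveI : Nonempty (Fin n) := ⟨⟨0, hn⟩⟩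
    haveI : Nontrivial (Matrix (Fin n) (Fin n) K) := inferInstance
    open Polynomial in
    set p := matPolyEquiv P with hp_def
    set q := matPolyEquiv Q with hq_def
    have hp : IsUnit p := hP.map (matPolyEquiv : _ ≃ₐ[K] _)
    have hq : IsUnit q := hQ.map (matPolyEquiv : _ ≃ₐ[K] _)
    have h' : p * (X - C A) * q = X - C B := by
      have := congrArg matPolyEquiv h
      simpa only [map_mul, Matrix.matPolyEquiv_charmatrix] using this
    set q' : (Matrix (Fin n) (Fin n) K)[X] := ↑hq.unit⁻¹ with hq'
    set p' : (Matrix (Fin n) (Fin n) K)[X] := ↑hp.unit⁻¹ with hp'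
    have hqq' : q * q' = 1 := hq.mul_val_inv
    have hp'p : p' * p = 1 := hp.val_inv_mul
    have hpp' : p * p' = 1 := hp.mul_val_inv
    have h1 : p * (X - C A) = (X - C B) * q' := by
      have h2 : p * (X - C A) * q * q' = (X - C B) * q' := by rw [h']
      rwa [mul_assoc, hqq', mul_one] at h2
    have h2 : p' * (X - C B) = (X - C A) * q := by
      have h3 : p' * (p * ((X - C A) * q)) = (X - C A) * q := by
        rw [← mul_assoc, hp'p, one_mul]
      rw [mul_assoc] at h'
      rw [h'] at h3
      exact h3
    obtain ⟨hC1, hcomm1⟩ := aux_remainder_intertwines A B p q' h1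
    obtain ⟨hC2, hcomm2⟩ := aux_remainder_intertwines B A p' q h2
    set P₀ := (p %ₘ (X - C B)).coeff 0 with hP₀
    set S₀ := (p' %ₘ (X - C A)).coeff 0 with hS₀
    have hswap : C S₀ * (X - C B) = (X - C A) * C S₀ := by
      rw [mul_sub, sub_mul, ← C_mul, ← C_mul, hcomm2, X_mul_C]
    set d1 := p' /ₘ (X - C A) with hd1
    set d2 := p /ₘ (X - C B) with hd2
    have hpdec : p = (X - C B) * d2 + C P₀ := by
      conv_lhs => rw [← modByMonic_add_div p (X - C B)]
      rw [← hC1, add_comm]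
    have hpdec' : p' = (X - C A) * d1 + C S₀ := by
      conv_lhs => rw [← modByMonic_add_div p' (X - C A)]
      rw [← hC2, add_comm]
    set w := d1 * p + C S₀ * d2 with hw
    have hfac : (X - C A) * w + C (S₀ * P₀) = 1 := by
      rw [← hp'p]
      calc (X - C A) * w + C (S₀ * P₀)
          = (X - C A) * (d1 * p) + ((X - C A) * C S₀) * d2 + C S₀ * C P₀ := by
            rw [hw, C_mul]; noncomm_ring
        _ = ((X - C A) * d1) * p + (C S₀ * (X - C B)) * d2 + C S₀ * C P₀ := by
            rw [hswap]; noncomm_ring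
        _ = ((X - C A) * d1) * p + C S₀ * ((X - C B) * d2 + C P₀) := by
            noncomm_ring
        _ = ((X - C A) * d1) * p + C S₀ * p := by rw [← hpdec]
        _ = ((X - C A) * d1 + C S₀) * p := by rw [add_mul]
        _ = p' * p := by rw [← hpdec']
    have hw0 : w = 0 := by
      by_contra h0
      have hlc : (X - C A).leadingCoeff * w.leadingCoeff ≠ 0 := by
        rw [(monic_X_sub_C A).leadingCoeff, one_mul]
        exact leadingCoeff_ne_zero.2 h0
      have hdw : ((X - C A) * w).degree = 1 + w.degree := by
        rw [degree_mul' hlc, degree_X_sub_C]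
      have heq : (X - C A) * w = C 1 - C (S₀ * P₀) := by
        rw [← eq_sub_iff_add_eq] at hfac
        rw [hfac, map_one]
      have hled : ((X - C A) * w).degree ≤ 0 := by
        rw [heq, ← C_sub]
        exact degree_C_le
      rw [hdw, degree_eq_natDegree h0] at hled
      have : (1 + w.natDegree : ℕ) ≤ 0 := by exact_mod_cast hled
      omega
    have hSP : S₀ * P₀ = 1 := by
      rw [hw0, mul_zero, zero_add] at hfac
      exact C_injective hfac
    have hU : IsUnit P₀ := by
      rw [Matrix.isUnit_iff_isUnit_det]
      exact IsUnit.of_mul_eq_one S₀.det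
        (by rw [← Matrix.det_mul, mul_eq_one_comm.mp hSP, Matrix.det_one])
    have hdet : IsUnit P₀.det := (Matrix.isUnit_iff_isUnit_det P₀).mp hU
    refine ⟨P₀⁻¹, Matrix.isUnit_nonsing_inv_iff.mpr hU, ?_⟩
    rw [Matrix.nonsing_inv_nonsing_inv P₀ hdet, hcomm1, mul_assoc,
      Matrix.mul_nonsing_inv P₀ hdet, mul_one]
end

section
/- For every finite field F with more than 3 elements, the projective special linear group PSL(2, F), namely the quotient of SL(2, F) by its center, is a simple group. -/
open Matrix Subgroup

namespace PSL2Aux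

variable {F : Type*} [Field F]

local notation "SL2" => Matrix.SpecialLinearGroup (Fin 2) F

/-- Build an element of `SL(2,F)` from four entries and a determinant proof. -/
def sm (a b c d : F) (h : a * d - b * c = 1) : SL2 :=
  ⟨!![a, b; c, d], by simp [Matrix.det_fin_two_of]; linear_combination h⟩

@[simp] lemma sm00 (a b c d : F) (h) : (sm a b c d h) 0 0 = a := rfl
@[simp] lemma sm01 (a b c d : F) (h) : (sm a b c d h) 0 1 = b := rfl
@[simp] lemma sm10 (a b c d : F) (h) : (sm a b c d h) 1 0 = c := rfl
@[simp] lemma sm11 (a b c d : F) (h) : (sm a b c d h) 1 1 = d := rfl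

lemma sm_ext {a b c d a' b' c' d' : F} {h h'} (h1 : a = a') (h2 : b = b')
    (h3 : c = c') (h4 : d = d') : sm a b c d h = sm a' b' c' d' h' := by
  subst h1; subst h2; subst h3; subst h4; rfl

lemma detm (A : SL2) : A 0 0 * A 1 1 - A 0 1 * A 1 0 = 1 := by
  have := A.2
  rwa [Matrix.det_fin_two] at this

lemma eta (A : SL2) : A = sm (A 0 0) (A 0 1) (A 1 0) (A 1 1) (detm A) :=
  Subtype.ext (Matrix.eta_fin_two _)

lemma sm_mul (a b c d a' b' c' d' : F) (h h') :
    sm a b c d h * sm a' b' c' d' h' =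
      sm (a * a' + b * c') (a * b' + b * d') (c * a' + d * c') (c * b' + d * d')
        (by linear_combination (a' * d' - b' * c') * h + h') :=
  Subtype.ext (by rw [Matrix.SpecialLinearGroup.coe_mul]; simp [sm, Matrix.mul_fin_two])

lemma sm_one : sm (1:F) 0 0 1 (by ring) = 1 := Subtype.ext (by simp [sm, Matrix.one_fin_two])

lemma sm_inv (a b c d : F) (h) :
    (sm a b c d h)⁻¹ = sm d (-b) (-c) a (by linear_combination h) := by
  rw [Matrix.SpecialLinearGroup.SL2_inv_expl]
  exact Subtype.ext rfl

/-- upper transvection -/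
def u (t : F) : SL2 := sm 1 t 0 1 (by ring)

/-- lower transvection -/
def lo (t : F) : SL2 := sm 1 0 t 1 (by ring)

/-- diagonal -/
def dm (α : F) (hα : α ≠ 0) : SL2 := sm α 0 0 α⁻¹ (by field_simp; ring)

/-- Weyl element -/
def w : SL2 := sm 0 (-1) 1 0 (by ring)

lemma u_mul (x y : F) : u x * u y = u (x + y) := by
  rw [u, u, u, sm_mul]; exact sm_ext (by ring) (by ring) (by ring) (by ring)

lemma u_zero : u (0 : F) = 1 := by rw [u, ← sm_one]

lemma u_inv (x : F) : (u x)⁻¹ = u (-x) := by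
  rw [u, sm_inv, u]; exact sm_ext (by ring) (by ring) (by ring) (by ring)

lemma lo_mul (x y : F) : lo x * lo y = lo (x + y) := by
  rw [lo, lo, lo, sm_mul]; exact sm_ext (by ring) (by ring) (by ring) (by ring)

lemma lo_zero : lo (0 : F) = 1 := by rw [lo, ← sm_one]

lemma dm_conj_u (α : F) (hα : α ≠ 0) (x : F) :
    dm α hα * u x * (dm α hα)⁻¹ = u (x * α ^ 2) := by
  rw [dm, sm_inv, u, u, sm_mul, sm_mul]
  apply sm_ext
  · field_simp; ring
  · field_simp; ring
  · ring
  · field_simp; ring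

lemma w_conj_u (x : F) : w * u x * w⁻¹ = lo (-x) := by
  rw [w, sm_inv, u, lo, sm_mul, sm_mul]
  apply sm_ext
  · ring
  · ring
  · ring
  · ring

lemma mem_of_c_ne_zero {N : Subgroup SL2} (hu : ∀ t : F, u t ∈ N) (hl : ∀ t : F, lo t ∈ N)
    (A : SL2) (hc : A 1 0 ≠ 0) : A ∈ N := by
  have hd := detm A
  have hA : u ((A 0 0 - 1) / A 1 0) * lo (A 1 0) * u ((A 1 1 - 1) / A 1 0) = A := by
    rw [u, lo, u, sm_mul, sm_mul]
    conv_rhs => rw [eta A]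
    apply sm_ext
    · field_simp; ring
    · field_simp; linear_combination hd
    · ring
    · field_simp; ring
  rw [← hA]
  exact mul_mem (mul_mem (hu _) (hl _)) (hu _)

lemma mem_of_transvections {N : Subgroup SL2} (hu : ∀ t : F, u t ∈ N) (hl : ∀ t : F, lo t ∈ N)
    (A : SL2) : A ∈ N := by
  by_cases hc : A 1 0 ≠ 0
  · exact mem_of_c_ne_zero hu hl A hc
  push_neg at hc
  have hd := detm A
  rw [hc, mul_zero, sub_zero] at hd
  have hd1 : A 1 1 ≠ 0 := fun h => by simp [h] at hd
  have he : A * lo 1 = sm (A 0 0 + A 0 1) (A 0 1) (A 1 0 + A 1 1) (A 1 1)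
      (by linear_combination detm A) := by
    conv_lhs => rw [eta A, lo, sm_mul]
    exact sm_ext (by ring) (by ring) (by ring) (by ring)
  have hA : A = (A * lo 1) * lo (-1) := by
    rw [mul_assoc, lo_mul]
    norm_num [lo_zero]
  rw [hA]
  refine mul_mem ?_ (hl _)
  rw [he]
  apply mem_of_c_ne_zero hu hl
  rw [sm10, hc, zero_add]
  exact hd1

variable [Fintype F]

/-- If a normal subgroup contains a nontrivial upper transvection, it is everything. -/
lemma eq_top_of_transvection_mem {N : Subgroup SL2} (hN : N.Normal) {t : F} (ht : t ≠ 0)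
    (htN : u t ∈ N) : N = ⊤ := by
  have st1 : ∀ α : F, u (t * α ^ 2) ∈ N := by
    intro α
    rcases eq_or_ne α 0 with h0 | h0
    · have hz : t * α ^ 2 = 0 := by rw [h0]; ring
      rw [hz, u_zero]; exact one_mem N
    · rw [← dm_conj_u α h0 t]
      exact hN.conj_mem _ htN _
  have all_u : ∀ s : F, u s ∈ N := by
    intro s
    by_cases h2 : (2 : F) = 0
    · have hinj : Function.Injective (fun x : F => x ^ 2) := by
        intro x y hxy
        simp only at hxy
        have h0 : (x - y) ^ 2 = 0 := by linear_combination hxy + (y ^ 2 - x * y) * h2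
        exact sub_eq_zero.mp (pow_eq_zero_iff (two_ne_zero) |>.mp h0)
      obtain ⟨γ, hγ⟩ := Finite.injective_iff_surjective.mp hinj (s / t)
      simp only at hγ
      have hts : t * γ ^ 2 = s := by rw [hγ]; field_simp
      rw [← hts]; exact st1 γ
    · have key : t * ((s / t + 1) / 2) ^ 2 + -(t * ((s / t - 1) / 2) ^ 2) = s := by
        field_simp; ring
      have hus : u s = u (t * ((s / t + 1) / 2) ^ 2) * (u (t * ((s / t - 1) / 2) ^ 2))⁻¹ := by
        rw [u_inv, u_mul, key]
      rw [hus]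
      exact mul_mem (st1 _) (inv_mem (st1 _))
  have all_lo : ∀ s : F, lo s ∈ N := by
    intro s
    have hls : lo s = w * u (-s) * w⁻¹ := by rw [w_conj_u, neg_neg]
    rw [hls]
    exact hN.conj_mem _ (all_u _) _
  exact eq_top_iff' N |>.mpr (mem_of_transvections all_u all_lo)

/-- If a normal subgroup contains an element of trace 2 with nonzero lower-left entry,
it is everything. -/
lemma eq_top_of_trace_two {N : Subgroup SL2} (hN : N.Normal) {p q r s : F} {h}
    (hM : sm p q r s h ∈ N) (hr : r ≠ 0) (htr : p + s = 2) : N = ⊤ := by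
  have hp : p = 2 - s := by linear_combination htr
  subst hp
  have hq : q = ((2 - s) * s - 1) / r := by
    rw [eq_div_iff hr]; linear_combination -h
  subst hq
  have hg : (1 - s) * 0 - (-r⁻¹) * r = 1 := by field_simp; ring
  have hconj : (sm (1 - s) (-r⁻¹) r 0 hg)⁻¹ * sm (2 - s) (((2 - s) * s - 1) / r) r s h
      * sm (1 - s) (-r⁻¹) r 0 hg = u (-r⁻¹) := by
    rw [sm_inv, sm_mul, sm_mul, u]
    apply sm_ext <;> first | rfl | ring1 | (field_simp; try ring1)
  have hmem : u (-r⁻¹) ∈ N := by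
    rw [← hconj, show ∀ g M : SL2, g⁻¹ * M * g = g⁻¹ * M * (g⁻¹)⁻¹ from fun g M => by
      rw [inv_inv]]
    exact hN.conj_mem _ hM _
  exact eq_top_of_transvection_mem hN (neg_ne_zero.mpr (inv_ne_zero hr)) hmem

/-- If a normal subgroup contains an element with nonzero lower-left entry, and there is
`α` with `α⁴ ≠ 1`, the subgroup is everything. -/
lemma eq_top_of_lower_left {N : Subgroup SL2} (hN : N.Normal) {p q r s : F} {h}
    (hM : sm p q r s h ∈ N) (hr : r ≠ 0) {α : F} (hα : α ≠ 0) (h4 : α ^ 4 ≠ 1) :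
    N = ⊤ := by
  -- companion form
  have hK : (0:F) * (p + s) - (-r⁻¹) * r = 1 := by field_simp; ring
  have hcomp : (u (p / r))⁻¹ * sm p q r s h * u (p / r) = sm 0 (-r⁻¹) r (p + s) hK := by
    rw [u, sm_inv, sm_mul, sm_mul]
    apply sm_ext <;>
      first
        | rfl
        | ring1
        | (field_simp; first | done | ring1 | linear_combination -h | linear_combination h |
            linear_combination r * h | linear_combination (-r) * h)
  have hKN : sm 0 (-r⁻¹) r (p + s) hK ∈ N := by
    rw [← hcomp, show ∀ g M : SL2, g⁻¹ * M * g = g⁻¹ * M * (g⁻¹)⁻¹ from fun g M => by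
      rw [inv_inv]]
    exact hN.conj_mem _ hM _
  -- conjugate of the companion by the diagonal
  have hK2 : (0:F) * (p + s) - (-(α^2 * r⁻¹)) * (r * α⁻¹ * α⁻¹) = 1 := by field_simp; ring
  have hconj2 : dm α hα * sm 0 (-r⁻¹) r (p + s) hK * (dm α hα)⁻¹
      = sm 0 (-(α^2 * r⁻¹)) (r * α⁻¹ * α⁻¹) (p + s) hK2 := by
    rw [dm, sm_inv, sm_mul, sm_mul]
    apply sm_ext <;> first | rfl | ring1 | (field_simp; try ring1)
  have hK2N : sm 0 (-(α^2 * r⁻¹)) (r * α⁻¹ * α⁻¹) (p + s) hK2 ∈ N := by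
    rw [← hconj2]; exact hN.conj_mem _ hKN _
  -- the product K * K'⁻¹ is lower triangular with diagonal α⁻², α²
  have hL : (α⁻¹ * α⁻¹) * (α * α) - 0 * ((p + s) * r * (1 - α⁻¹ * α⁻¹)) = 1 := by
    field_simp; ring
  have hLf : sm 0 (-r⁻¹) r (p + s) hK * (sm 0 (-(α^2 * r⁻¹)) (r * α⁻¹ * α⁻¹) (p + s) hK2)⁻¹
      = sm (α⁻¹ * α⁻¹) 0 ((p + s) * r * (1 - α⁻¹ * α⁻¹)) (α * α) hL := by
    rw [sm_inv, sm_mul]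
    apply sm_ext <;> first | rfl | ring1 | (field_simp; try ring1)
  have hLN : sm (α⁻¹ * α⁻¹) 0 ((p + s) * r * (1 - α⁻¹ * α⁻¹)) (α * α) hL ∈ N := by
    rw [← hLf]
    exact mul_mem hKN (inv_mem hK2N)
  -- commutator with lo 1 gives lo (α^4 - 1)
  have hCf : sm (α⁻¹ * α⁻¹) 0 ((p + s) * r * (1 - α⁻¹ * α⁻¹)) (α * α) hL
      * (lo 1 * (sm (α⁻¹ * α⁻¹) 0 ((p + s) * r * (1 - α⁻¹ * α⁻¹)) (α * α) hL)⁻¹ * (lo 1)⁻¹)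
      = lo (α ^ 4 - 1) := by
    rw [lo, sm_inv, sm_inv, sm_mul, sm_mul, sm_mul, lo]
    apply sm_ext <;> first | rfl | ring1 | (field_simp; try ring1)
  have hCN : lo (α ^ 4 - 1) ∈ N := by
    rw [← hCf]
    exact mul_mem hLN (hN.conj_mem _ (inv_mem hLN) _)
  -- transfer to an upper transvection
  have huC : u (-(α ^ 4 - 1)) ∈ N := by
    have hwc := w_conj_u (-(α ^ 4 - 1))
    rw [neg_neg] at hwc
    have : u (-(α ^ 4 - 1)) = w⁻¹ * lo (α ^ 4 - 1) * (w⁻¹)⁻¹ := by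
      rw [inv_inv, ← hwc]; group
    rw [this]
    exact hN.conj_mem _ hCN _
  exact eq_top_of_transvection_mem hN (neg_ne_zero.mpr (sub_ne_zero.mpr h4)) huC

/-- The commutator construction: the standard `B u(x) B⁻¹ u(-x)` element. -/
lemma W_form (a b c d x : F) (h : a * d - b * c = 1) :
    sm a b c d h * u x * (sm a b c d h)⁻¹ * u (-x) =
      sm (1 - a*c*x) (x*(a^2 + a*c*x - 1)) (-(c^2*x)) (1 + a*c*x + c^2*x^2) (by ring) := by
  rw [u, u, sm_inv, sm_mul, sm_mul, sm_mul]
  apply sm_ext <;>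
    first
      | rfl
      | ring1
      | linear_combination h
      | linear_combination (-x) * h
      | linear_combination x * h
      | linear_combination -h

/-- Diagonal (scalar-like) elements are central. -/
lemma mem_center_of_diag {A : SL2} (hb : A 0 1 = 0) (hc : A 1 0 = 0)
    (had : A 0 0 = A 1 1) : A ∈ center SL2 := by
  have hdd := detm A
  rw [hb, hc, had] at hdd
  have hAe : A = sm (A 1 1) 0 0 (A 1 1) (by linear_combination hdd) := by
    conv_lhs => rw [eta A]
    exact sm_ext had hb hc rfl
  rw [Subgroup.mem_center_iff]
  intro g
  rw [hAe]
  conv_lhs => rw [eta g, sm_mul]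
  conv_rhs => rw [eta g, sm_mul]
  apply sm_ext <;> first | rfl | ring1

/-- From a noncentral element of a normal subgroup, obtain an element with nonzero
lower-left entry. -/
lemma exists_lower {N : Subgroup SL2} (hN : N.Normal) {A : SL2} (hA : A ∈ N)
    (hAc : A ∉ center SL2) : ∃ B, B ∈ N ∧ B 1 0 ≠ 0 := by
  by_cases hc : A 1 0 ≠ 0
  · exact ⟨A, hA, hc⟩
  push_neg at hc
  by_cases hb : A 0 1 ≠ 0
  · have hwf : w * A * w⁻¹ = sm (A 1 1) (-(A 1 0)) (-(A 0 1)) (A 0 0)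
        (by linear_combination detm A) := by
      rw [w, sm_inv]
      conv_lhs => rw [eta A]
      rw [sm_mul, sm_mul]
      apply sm_ext <;> first | rfl | ring1
    refine ⟨w * A * w⁻¹, hN.conj_mem _ hA _, ?_⟩
    rw [hwf, sm10]
    exact neg_ne_zero.mpr hb
  push_neg at hb
  have had : A 0 0 ≠ A 1 1 := fun h => hAc (mem_center_of_diag hb hc h)
  have hlf : lo 1 * A * (lo 1)⁻¹ = sm (A 0 0) (A 0 1) (A 0 0 - A 1 1) (A 1 1)
      (by linear_combination detm A + (A 1 0 + A 1 1 - A 0 0) * hb) := by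
    rw [lo, sm_inv]
    conv_lhs => rw [eta A]
    rw [sm_mul, sm_mul]
    apply sm_ext <;>
      first
        | rfl
        | ring1
        | linear_combination hb
        | linear_combination -hb
        | linear_combination hc - hb
        | linear_combination hb - hc
        | linear_combination hc
        | linear_combination -hc
        | linear_combination (A 1 1 - A 0 0) * hb
        | linear_combination (A 0 0 - A 1 1) * hb
  refine ⟨lo 1 * A * (lo 1)⁻¹, hN.conj_mem _ hA _, ?_⟩
  rw [hlf, sm10]
  exact sub_ne_zero.mpr had

/-- Key lemma: a normal subgroup containing a noncentral element is everything. -/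
lemma normal_eq_top {N : Subgroup SL2} (hN : N.Normal) {A : SL2} (hA : A ∈ N)
    (hAc : A ∉ center SL2) (hF : 3 < Fintype.card F) : N = ⊤ := by
  obtain ⟨B, hBN, hc⟩ := exists_lower hN hA hAc
  obtain ⟨a, b, c, d, h, hBe⟩ : ∃ a b c d h, B = sm a b c d h :=
    ⟨_, _, _, _, detm B, eta B⟩
  rw [hBe, sm10] at hc
  rw [hBe] at hBN
  by_cases hex : ∃ α : F, α ≠ 0 ∧ α ^ 4 ≠ 1
  · obtain ⟨α, hα, h4⟩ := hex
    exact eq_top_of_lower_left hN hBN hc hα h4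
  -- the exceptional case: every nonzero element has fourth power one
  push_neg at hex
  -- find θ outside {0, 1, -1}
  have h3 : ∃ θ : F, θ ≠ 0 ∧ θ ≠ 1 ∧ θ ≠ -1 := by
    classical
    by_contra hcon
    push_neg at hcon
    have hsub : (Finset.univ : Finset F) ⊆ {0, 1, -1} := by
      intro θ _
      simp only [Finset.mem_insert, Finset.mem_singleton]
      by_cases h0 : θ = 0
      · exact Or.inl h0
      by_cases h1 : θ = 1
      · exact Or.inr (Or.inl h1)
      · exact Or.inr (Or.inr (hcon θ h0 h1))
    have := Finset.card_le_card hsub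
    rw [Finset.card_univ] at this
    have h33 : ({0, 1, -1} : Finset F).card ≤ 3 := by
      apply le_trans (Finset.card_insert_le _ _)
      apply Nat.succ_le_succ
      apply le_trans (Finset.card_insert_le _ _)
      simp
    omega
  obtain ⟨θ, hθ0, hθ1, hθm1⟩ := h3
  have hθ2 : θ ^ 2 ≠ 1 := by
    intro h1
    rcases mul_eq_zero.mp (show (θ - 1) * (θ + 1) = 0 by linear_combination h1) with hz | hz
    · exact hθ1 (by linear_combination hz)
    · exact hθm1 (by linear_combination hz)
  have hi : θ ^ 2 = -1 := by
    have hθ4 := hex θ hθ0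
    rcases mul_eq_zero.mp (show (θ^2 - 1) * (θ^2 + 1) = 0 by linear_combination hθ4) with hz | hz
    · exact absurd (by linear_combination hz) hθ2
    · linear_combination hz
  have h2 : (2 : F) ≠ 0 := fun h2' => hθ2 (by linear_combination hi - h2')
  -- the element W = B u(x) B⁻¹ u(-x) with x = 2θ/c has trace -2; its square has trace 2
  set x : F := 2 * θ / c with hx
  have hx0 : x ≠ 0 := div_ne_zero (mul_ne_zero h2 hθ0) hc
  have hWN : sm (1 - a*c*x) (x*(a^2 + a*c*x - 1)) (-(c^2*x)) (1 + a*c*x + c^2*x^2)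
      (by ring) ∈ N := by
    rw [← W_form a b c d x h]
    have hassoc : sm a b c d h * u x * (sm a b c d h)⁻¹ * u (-x)
        = sm a b c d h * (u x * (sm a b c d h)⁻¹ * (u x)⁻¹) := by
      rw [u_inv]; group
    rw [hassoc]
    exact mul_mem hBN (hN.conj_mem _ (inv_mem hBN) _)
  -- the square
  have hsqf := sm_mul (1 - a*c*x) (x*(a^2 + a*c*x - 1)) (-(c^2*x)) (1 + a*c*x + c^2*x^2)
      (1 - a*c*x) (x*(a^2 + a*c*x - 1)) (-(c^2*x)) (1 + a*c*x + c^2*x^2) (by ring) (by ring)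
  have hsqN := mul_mem hWN hWN
  rw [hsqf] at hsqN
  have hcx : c^2 * x^2 = -4 := by
    rw [hx]; field_simp; linear_combination 4 * hi
  have hrr : (-(c^2*x)) * (1 - a*c*x) + (1 + a*c*x + c^2*x^2) * (-(c^2*x)) = 2*c^2*x := by
    linear_combination (-(c^2*x)) * hcx
  have htt : ((1 - a*c*x) * (1 - a*c*x) + (x*(a^2 + a*c*x - 1)) * (-(c^2*x)))
      + ((-(c^2*x)) * (x*(a^2 + a*c*x - 1)) + (1 + a*c*x + c^2*x^2) * (1 + a*c*x + c^2*x^2))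
      = 2 := by
    linear_combination (c^2*x^2) * hcx
  have h2c : (2:F) * c^2 * x ≠ 0 :=
    mul_ne_zero (mul_ne_zero h2 (pow_ne_zero 2 hc)) hx0
  exact eq_top_of_trace_two hN hsqN (by rw [hrr]; exact h2c) htt

lemma u_one_not_center : u (1:F) ∉ center SL2 := by
  intro hmem
  have hcomm := Subgroup.mem_center_iff.mp hmem w
  rw [u, w, sm_mul, sm_mul] at hcomm
  have h00 := congrArg (fun M : SL2 => M 0 0) hcomm
  simp only [sm00] at h00
  norm_num at h00

end PSL2Aux

/-- For every finite field `F` with more than 3 elements, the projective special linear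
group `PSL(2, F) = SL(2, F) / center` is a simple group. -/
theorem PSL2_simple (F : Type*) [Field F] [Fintype F] (hF : 3 < Fintype.card F) :
    IsSimpleGroup
      (Matrix.SpecialLinearGroup (Fin 2) F ⧸
        Subgroup.center (Matrix.SpecialLinearGroup (Fin 2) F)) := by
  set G := Matrix.SpecialLinearGroup (Fin 2) F with hG
  have hnc := PSL2Aux.u_one_not_center (F := F)
  have hnt : Nontrivial (G ⧸ Subgroup.center G) := by
    refine ⟨⟨QuotientGroup.mk (PSL2Aux.u 1), 1, fun hmk => hnc ?_⟩⟩
    exact (QuotientGroup.eq_one_iff _).mp hmk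
  refine { toNontrivial := hnt, eq_bot_or_eq_top_of_normal := fun H hH => ?_ }
  by_cases hb : H = ⊥
  · exact Or.inl hb
  · right
    have hex : ∃ x ∈ H, x ≠ 1 := by
      by_contra hno
      push_neg at hno
      exact hb (eq_bot_iff.mpr fun x hx => Subgroup.mem_bot.mpr (hno x hx))
    obtain ⟨x, hxH, hx1⟩ := hex
    obtain ⟨A, rfl⟩ := QuotientGroup.mk'_surjective (Subgroup.center G) x
    have hAnc : A ∉ Subgroup.center G := fun hA => hx1 ((QuotientGroup.eq_one_iff A).mpr hA)
    have hAH : A ∈ H.comap (QuotientGroup.mk' (Subgroup.center G)) := Subgroup.mem_comap.mpr hxH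
    have htop := PSL2Aux.normal_eq_top (hH.comap _) hAH hAnc hF
    calc H = (H.comap (QuotientGroup.mk' (Subgroup.center G))).map
          (QuotientGroup.mk' (Subgroup.center G)) :=
        (Subgroup.map_comap_eq_self_of_surjective (QuotientGroup.mk'_surjective _) H).symm
      _ = ⊤ := by
        rw [htop]
        exact Subgroup.map_top_of_surjective _ (QuotientGroup.mk'_surjective _)
end

section
/- For every integer n ≥ 5, if H is a subgroup of the symmetric group S_n whose index [S_n : H] is strictly less than n, then H = S_n or H = A_n; equivalently, every proper subgroup of S_n other than the alternating group A_n has index at least n (Bertrand's theorem on the number of values of a function of n variables). -/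
open Equiv Equiv.Perm Subgroup

private lemma aux_units_int (a b : ℤˣ) : a * b * a⁻¹ * b⁻¹ = 1 := by
  rcases Int.units_eq_one_or a with rfl | rfl <;>
    rcases Int.units_eq_one_or b with rfl | rfl <;> decide

/-- Every nontrivial normal subgroup of `S_n` (for `n ≥ 5`) contains the alternating group. -/
private lemma alternating_le_of_normal (n : ℕ) (hn : 5 ≤ n)
    (N : Subgroup (Equiv.Perm (Fin n))) [hN : N.Normal] (hbot : N ≠ ⊥) :
    alternatingGroup (Fin n) ≤ N := by
  classical
  -- obtain a nontrivial element of N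
  obtain ⟨σ, hσN, hσ1⟩ : ∃ σ ∈ N, σ ≠ 1 := by
    by_contra hc
    push_neg at hc
    exact hbot (Subgroup.eq_bot_iff_forall N |>.2 hc)
  obtain ⟨a, ha⟩ : ∃ a, σ a ≠ a := by
    by_contra hc
    push_neg at hc
    exact hσ1 (Equiv.ext fun x => hc x)
  set b := σ a with hb
  have hba : b ≠ a := ha
  obtain ⟨c, hc⟩ : ∃ c, c ∉ ({a, b} : Finset (Fin n)) := by
    by_contra hcon
    push_neg at hcon
    have h1 : (Finset.univ : Finset (Fin n)) ⊆ {a, b} := fun x _ => hcon x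
    have h2 := Finset.card_le_card h1
    have h3 : ({a, b} : Finset (Fin n)).card ≤ 2 :=
      (Finset.card_insert_le _ _).trans (by simp)
    simp only [Finset.card_univ, Fintype.card_fin] at h2
    omega
  simp only [Finset.mem_insert, Finset.mem_singleton, not_or] at hc
  obtain ⟨hca, hcb⟩ := hc
  set τ : Equiv.Perm (Fin n) := Equiv.swap b c with hτ
  set γ : Equiv.Perm (Fin n) := σ * τ * σ⁻¹ * τ⁻¹ with hγ
  have hγN : γ ∈ N := by
    have h1 : τ * σ⁻¹ * τ⁻¹ ∈ N := hN.conj_mem _ (N.inv_mem hσN) τ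
    have h2 : σ * (τ * σ⁻¹ * τ⁻¹) ∈ N := N.mul_mem hσN h1
    simpa [hγ, mul_assoc] using h2
  have hγc : γ c = b := by
    simp only [hγ, hτ, Equiv.Perm.mul_apply]
    rw [Equiv.swap_inv, Equiv.swap_apply_right]
    have hh : σ⁻¹ b = a := by rw [hb]; exact σ.symm_apply_apply a
    rw [hh, Equiv.swap_apply_of_ne_of_ne (Ne.symm hba) (fun h => hca h.symm), hb]
  have hγ1 : γ ≠ 1 := by
    intro h
    rw [h] at hγc
    simp only [Equiv.Perm.one_apply] at hγc
    exact hcb hγc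
  -- γ is a product of two swaps
  have hγ2 : γ = Equiv.swap (σ b) (σ c) * Equiv.swap b c := by
    rw [Equiv.swap_apply_apply, hγ, hτ, Equiv.swap_inv]
  have hbc : b ≠ c := fun h => hcb h.symm
  -- the support of γ has at most 4 elements
  have hsupp : γ.support ⊆ {σ b, σ c, b, c} := by
    rw [hγ2]
    refine (Equiv.Perm.support_mul_le _ _).trans ?_
    rw [Equiv.Perm.support_swap (fun h => hbc (σ.injective h)),
      Equiv.Perm.support_swap hbc]
    intro x hx
    simp only [Finset.sup_eq_union, Finset.mem_union, Finset.mem_insert,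
      Finset.mem_singleton] at hx ⊢
    tauto
  have hcard : γ.support.card ≤ 4 := by
    refine (Finset.card_le_card hsupp).trans ?_
    refine (Finset.card_insert_le _ _).trans ?_
    refine Nat.succ_le_succ ?_
    refine (Finset.card_insert_le _ _).trans ?_
    refine Nat.succ_le_succ ?_
    exact (Finset.card_insert_le _ _).trans (by simp)
  -- find a 5-element set containing the support of γ
  obtain ⟨S, hSsub, -, hScard⟩ :=
    Finset.exists_subsuperset_card_eq (s := γ.support) (t := (Finset.univ : Finset (Fin n)))
      (n := 5) (Finset.subset_univ _) (hcard.trans (by norm_num))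
      (by simpa [Finset.card_univ] using hn)
  set e' : Fin 5 ≃ {x // x ∈ S} := (S.equivFinOfCardEq hScard).symm with he'
  set φ : Equiv.Perm (Fin 5) →* Equiv.Perm (Fin n) := Equiv.Perm.extendDomainHom e' with hφ
  have hiff : ∀ x, x ∈ S ↔ γ x ∈ S := by
    intro x
    constructor
    · intro hx
      by_cases hfix : γ x = x
      · rwa [hfix]
      · exact hSsub (Equiv.Perm.apply_mem_support.2 (Equiv.Perm.mem_support.2 hfix))
    · intro hx
      by_cases hfix : γ x = x
      · rwa [← hfix]
      · exact hSsub (Equiv.Perm.mem_support.2 hfix)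
  set π : Equiv.Perm {x // x ∈ S} := γ.subtypePerm (fun x => (hiff x).symm) with hπ
  set δ : Equiv.Perm (Fin 5) := e'.symm.permCongr π with hδ
  have hφδ : φ δ = γ := by
    rw [hφ]
    show δ.extendDomain e' = γ
    apply Equiv.ext
    intro x
    by_cases hx : x ∈ S
    · rw [Equiv.Perm.extendDomain_apply_subtype _ _ hx]
      simp only [hδ, Equiv.permCongr_apply, Equiv.symm_symm, Equiv.apply_symm_apply, hπ]
      rfl
    · rw [Equiv.Perm.extendDomain_apply_not_subtype _ _ hx]
      by_cases hfix : γ x = x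
      · exact hfix.symm
      · exact absurd (hSsub (Equiv.Perm.mem_support.2 hfix)) hx
  have hδ1 : δ ≠ 1 := by
    intro h
    apply hγ1
    rw [← hφδ, h, map_one]
  have hδA : δ ∈ alternatingGroup (Fin 5) := by
    rw [Equiv.Perm.mem_alternatingGroup]
    have hsg : Equiv.Perm.sign γ = 1 := by
      rw [hγ]
      rw [map_mul, map_mul, map_mul, map_inv, map_inv]
      exact aux_units_int _ _
    have := Equiv.Perm.sign_extendDomain δ e'
    rw [← hφδ] at hsg
    rw [hφ] at hsg
    exact (this ▸ hsg : _)
  -- the pullback of N to A_5 is a nontrivial normal subgroup, hence everything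
  set f : alternatingGroup (Fin 5) →* Equiv.Perm (Fin n) :=
    φ.comp (alternatingGroup (Fin 5)).subtype with hf
  set K : Subgroup (alternatingGroup (Fin 5)) := N.comap f with hK
  have hKnormal : K.Normal := by
    constructor
    intro x hx g
    simp only [hK, Subgroup.mem_comap, map_mul, map_inv] at hx ⊢
    have := hN.conj_mem _ hx (f g)
    simpa [mul_assoc] using this
  have hKne : K ≠ ⊥ := by
    intro hbot5
    have hmem : (⟨δ, hδA⟩ : alternatingGroup (Fin 5)) ∈ K := by
      simp only [hK, Subgroup.mem_comap, hf, MonoidHom.comp_apply]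
      simpa [hφδ] using hγN
    rw [hbot5, Subgroup.mem_bot] at hmem
    exact hδ1 (congrArg Subtype.val hmem)
  have hKtop : K = ⊤ := by
    rcases (IsSimpleGroup.eq_bot_or_eq_top_of_normal K hKnormal) with h | h
    · exact absurd h hKne
    · exact h
  -- extract a 3-cycle from N
  have h3 : Equiv.Perm.IsThreeCycle (Fin.cycleRange 2 : Equiv.Perm (Fin 5)) :=
    Fin.isThreeCycle_cycleRange_two
  have hmem3 : (⟨Fin.cycleRange 2, h3.mem_alternatingGroup⟩ : alternatingGroup (Fin 5)) ∈ K := by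
    rw [hKtop]; trivial
  have hγ3N : φ (Fin.cycleRange 2) ∈ N := by
    simpa [hK, hf] using hmem3
  have hγ3 : Equiv.Perm.IsThreeCycle (φ (Fin.cycleRange 2)) := by
    rw [← card_support_eq_three_iff]
    rw [hφ]
    show ((Fin.cycleRange 2 : Equiv.Perm (Fin 5)).extendDomain e').support.card = 3
    rw [Equiv.Perm.card_support_extend_domain]
    exact h3.card_support
  -- every 3-cycle is conjugate to it, so N contains all 3-cycles
  rw [← Equiv.Perm.closure_three_cycles_eq_alternating]
  rw [Subgroup.closure_le]
  intro g hg
  have hconjg : IsConj (φ (Fin.cycleRange 2)) g :=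
    Equiv.Perm.isConj_of_cycleType_eq (hγ3.cycleType.trans hg.cycleType.symm)
  obtain ⟨π₀, hπ₀⟩ := isConj_iff.1 hconjg
  rw [← hπ₀]
  exact hN.conj_mem _ hγ3N π₀

/-- **Bertrand's theorem on the number of values of a function of `n` variables.**
For `n ≥ 5`, every subgroup of the symmetric group `S_n` of index strictly less than `n`
is either `S_n` itself or the alternating group `A_n`. -/
theorem bertrand_index_lt (n : ℕ) (hn : 5 ≤ n)
    (H : Subgroup (Equiv.Perm (Fin n))) (h : H.index < n) :
    H = ⊤ ∨ H = alternatingGroup (Fin n) := by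
  classical
  have hidx0 : H.index ≠ 0 := Subgroup.index_ne_zero_of_finite
  set N := H.normalCore with hNdef
  have hNle : N ≤ H := H.normalCore_le
  have hdvd : N.index ∣ Nat.factorial H.index := by
    rw [hNdef, Subgroup.normalCore_eq_ker, Subgroup.index_ker]
    have h1 : Nat.card (MulAction.toPermHom (Equiv.Perm (Fin n))
        (Equiv.Perm (Fin n) ⧸ H)).range ∣
        Nat.card (Equiv.Perm (Equiv.Perm (Fin n) ⧸ H)) :=
      Subgroup.card_subgroup_dvd_card _
    have h2 : Nat.card (Equiv.Perm (Equiv.Perm (Fin n) ⧸ H)) = Nat.factorial H.index := by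
      rw [Nat.card_eq_fintype_card, Fintype.card_perm, ← Nat.card_eq_fintype_card,
        ← Subgroup.index_eq_card]
    rwa [h2] at h1
  have hNbot : N ≠ ⊥ := by
    intro hb
    rw [hb, Subgroup.index_bot, Nat.card_eq_fintype_card, Fintype.card_perm,
      Fintype.card_fin] at hdvd
    have hle : Nat.factorial n ≤ Nat.factorial H.index := Nat.le_of_dvd (Nat.factorial_pos _) hdvd
    have hlt : Nat.factorial H.index < Nat.factorial n := (Nat.factorial_lt (Nat.pos_of_ne_zero hidx0)).2 h
    omega
  have hAN : alternatingGroup (Fin n) ≤ N := alternating_le_of_normal n hn N hNbot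
  have hAH : alternatingGroup (Fin n) ≤ H := hAN.trans hNle
  have hnont : Nontrivial (Fin n) :=
    ⟨⟨⟨0, by omega⟩, ⟨1, by omega⟩, by simp [Fin.ext_iff]⟩⟩
  have hA2 : (alternatingGroup (Fin n)).index = 2 := by
    rw [alternatingGroup_eq_sign_ker, Subgroup.index_ker]
    rw [MonoidHom.range_eq_top.2 (Equiv.Perm.sign_surjective (Fin n))]
    rw [Subgroup.card_top, Nat.card_eq_fintype_card]
    exact Fintype.card_units_int
  have hdvd2 : H.index ∣ 2 := hA2 ▸ Subgroup.index_dvd_of_le hAH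
  rcases (Nat.dvd_prime Nat.prime_two).1 hdvd2 with hi | hi
  · left
    exact Subgroup.index_eq_one.1 hi
  · right
    have hrel := Subgroup.relIndex_mul_index hAH
    rw [hA2, hi] at hrel
    have : (alternatingGroup (Fin n)).relIndex H = 1 := by omega
    exact le_antisymm (Subgroup.relIndex_eq_one.1 this) hAH
end
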